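/- arXiv:1809.07136 — 5 statements merged into one kernel-verified Lean document; each statement's English description precedes it below -/
import Mathlib

section
/- Let c > 0, x₁, x₂ ∈ ℝ, τ(x) = 1 + e^{ix}, and let S(x₁,x₂) be the 4×4 Hermitian matrix with 2×2 blocks [[B₁, τ(x₁)I₂],[τ(−x₁)I₂, B₂]], where B₁ = [[c, τ(x₂)],[τ(−x₂), −c]] and B₂ = [[−c, τ(x₂)],[τ(−x₂), c]]. Then the characteristic polynomial of S at λ is (λ² − c² − (|τ(x₂)| + |τ(x₁)|)²)(λ² − c² − (|τ(x₂)| − |τ(x₁)|)²). -/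
/-!
The off-diagonal blocks of `S - λ` are scalar, so they commute with the diagonal blocks and the
determinant collapses to that of the `2 × 2` matrix `(B₁ - λ)(B₂ - λ) - |τ(x₁)|² I₂`. Its
determinant is `(λ² - c² - |τ(x₁)|² - |τ(x₂)|²)² - 4 |τ(x₁)|² |τ(x₂)|²`, a difference of squares.
-/

open Matrix

noncomputable section

/-- `τ(x) = 1 + e^{ix}`. -/
def tau (x : ℝ) : ℂ := 1 + Complex.exp (x * Complex.I)

/-- The symbol of the (2,2)-periodic discrete Schrödinger operator with potential
`c_{ij} = (−1)^{i+j} c`. -/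
def symb (c x₁ x₂ : ℝ) : Matrix (Fin 2 ⊕ Fin 2) (Fin 2 ⊕ Fin 2) ℂ :=
  Matrix.fromBlocks
    !![(c : ℂ), tau x₂; tau (-x₂), (-c : ℂ)]
    (tau x₁ • (1 : Matrix (Fin 2) (Fin 2) ℂ))
    (tau (-x₁) • (1 : Matrix (Fin 2) (Fin 2) ℂ))
    !![(-c : ℂ), tau x₂; tau (-x₂), (c : ℂ)]

open Polynomial

namespace Matrix

variable {n R : Type*} [Fintype n] [DecidableEq n] [CommRing R]

theorem det_fromBlocks_mul_det_of_commute (A B C D : Matrix n n R) (hCD : Commute C D) :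
    (fromBlocks A B C D).det * D.det = (A * D - B * C).det * D.det := by
  have h : fromBlocks A B C D * fromBlocks D 0 (-C) 1 = fromBlocks (A * D - B * C) B 0 D := by
    rw [fromBlocks_multiply, hCD.eq]
    simp [sub_eq_add_neg]
  simpa [det_mul, det_fromBlocks_zero₂₁, det_fromBlocks_zero₁₂] using congrArg det h

theorem charmatrix_neg_map_eval_zero (D : Matrix n n R) :
    (charmatrix (-D)).map (evalRingHom 0) = D := by
  ext i j
  by_cases h : i = j <;> simp [h]

/-- To cancel `det D`, replace `D` by `D + X`, whose determinant `charpoly (-D)` is monic. -/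
theorem det_fromBlocks_of_commute (A B C D : Matrix n n R) (hCD : Commute C D) :
    (fromBlocks A B C D).det = (A * D - B * C).det := by
  let ι : Matrix n n R →+* Matrix n n R[X] := (Polynomial.C : R →+* R[X]).mapMatrix
  have hι : ∀ M, (ι M).map (evalRingHom 0) = M := fun M ↦ by ext; simp [ι]
  have hCD' : Commute (ι C) (charmatrix (-D)) :=
    ((scalar_commute X (Commute.all X) _).symm).sub_right (hCD.neg_right.map ι)
  have hlift : (fromBlocks (ι A) (ι B) (ι C) (charmatrix (-D))).det =
      (ι A * charmatrix (-D) - ι B * ι C).det :=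
    (charpoly_monic (-D)).isRegular.right (det_fromBlocks_mul_det_of_commute _ _ _ _ hCD')
  simpa only [RingHom.map_det, RingHom.mapMatrix_apply, fromBlocks_map, map_sub, map_mul, hι,
    charmatrix_neg_map_eval_zero] using congrArg (evalRingHom 0) hlift

end Matrix

theorem det_fromBlocks_fin_two_sub_smul_one {R : Type*} [CommRing R] (c t t' s s' l : R) :
    (fromBlocks !![c, t; t', -c] (s • 1) (s' • 1) !![-c, t; t', c] -
        l • (1 : Matrix (Fin 2 ⊕ Fin 2) (Fin 2 ⊕ Fin 2) R)).det =
      (l ^ 2 - c ^ 2 - s * s' - t * t') ^ 2 - 4 * (s * s') * (t * t') := by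
  have hblocks : fromBlocks !![c, t; t', -c] (s • 1) (s' • 1) !![-c, t; t', c] -
        l • (1 : Matrix (Fin 2 ⊕ Fin 2) (Fin 2 ⊕ Fin 2) R) =
      fromBlocks !![c - l, t; t', -c - l] (s • 1) (s' • 1) !![-c - l, t; t', c - l] := by
    ext (i | i) (j | j) <;> fin_cases i <;> fin_cases j <;> simp
  rw [hblocks, det_fromBlocks_of_commute _ _ _ _ ((Commute.one_left _).smul_left s')]
  simp [det_fin_two]
  ring

theorem tau_neg (x : ℝ) : tau (-x) = starRingEnd ℂ (tau x) := by
  simp [tau, ← Complex.exp_conj]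

theorem tau_mul_tau_neg (x : ℝ) : tau x * tau (-x) = ((‖tau x‖ ^ 2 : ℝ) : ℂ) := by
  rw [tau_neg, Complex.mul_conj, Complex.normSq_eq_norm_sq]

theorem charpoly_symb_general (c x₁ x₂ lam : ℝ) :
    (symb c x₁ x₂ - (lam : ℂ) • (1 : Matrix (Fin 2 ⊕ Fin 2) (Fin 2 ⊕ Fin 2) ℂ)).det =
      (( (lam ^ 2 - c ^ 2 - (‖tau x₂‖ + ‖tau x₁‖) ^ 2) *
         (lam ^ 2 - c ^ 2 - (‖tau x₂‖ - ‖tau x₁‖) ^ 2) : ℝ) : ℂ) := by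
  rw [symb, det_fromBlocks_fin_two_sub_smul_one, tau_mul_tau_neg, tau_mul_tau_neg]
  push_cast
  ring

/-- The characteristic polynomial of the symbol:
`det(S − λI) = (λ² − c² − (|τ(x₂)|+|τ(x₁)|)²)(λ² − c² − (|τ(x₂)|−|τ(x₁)|)²)`. -/
theorem charpoly_symb (c x₁ x₂ lam : ℝ) (hc : 0 < c) :
    (symb c x₁ x₂ - (lam : ℂ) • (1 : Matrix (Fin 2 ⊕ Fin 2) (Fin 2 ⊕ Fin 2) ℂ)).det =
      (( (lam ^ 2 - c ^ 2 - (‖tau x₂‖ + ‖tau x₁‖) ^ 2) *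
         (lam ^ 2 - c ^ 2 - (‖tau x₂‖ - ‖tau x₁‖) ^ 2) : ℝ) : ℂ) :=
  charpoly_symb_general c x₁ x₂ lam

end
end

section
/- Let c₁, c₂ > 0, and define for (x₁,x₂) ∈ ℝ², A = (c₁²+c₂²)/2 + |τ(x₁)|² + |τ(x₂)|² and B = (|τ(x₂)|² − |τ(x₁)|² − c₁c₂)², with τ(x) = 1+e^{ix}. Then the discriminant satisfies A² − B = [(c₁−c₂)²/2 + 2|τ(x₂)|²]·[(c₁+c₂)²/2 + 2|τ(x₁)|²] ≥ 0, and both roots z± = A ± √(A²−B) of z² − 2Az + B are nonnegative reals. -/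
open Real

noncomputable section

/-- `A = (c₁²+c₂²)/2 + |τ(x₁)|² + |τ(x₂)|²`. -/
def Aval (c₁ c₂ x₁ x₂ : ℝ) : ℝ :=
  (c₁ ^ 2 + c₂ ^ 2) / 2 + ‖tau x₁‖ ^ 2 + ‖tau x₂‖ ^ 2

/-- `B = (|τ(x₂)|² − |τ(x₁)|² − c₁c₂)²`. -/
def Bval (c₁ c₂ x₁ x₂ : ℝ) : ℝ :=
  (‖tau x₂‖ ^ 2 - ‖tau x₁‖ ^ 2 - c₁ * c₂) ^ 2

/-! Both roots are nonnegative because `A ≥ 0` and `B ≥ 0`: then `A² − B ≤ A²`, so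
`√(A² − B) ≤ A`. The discriminant is a difference of squares, and each of the two factors
`A ∓ (|τ(x₂)|² − |τ(x₁)|² − c₁c₂)` completes to a sum of a square and `2|τ|²`. -/

theorem quadratic_eq_zero_of_eq_sub_sqrt_or_eq_add_sqrt {A B z : ℝ} (hD : 0 ≤ A ^ 2 - B)
    (hz : z = A - √(A ^ 2 - B) ∨ z = A + √(A ^ 2 - B)) :
    z ^ 2 - 2 * A * z + B = 0 := by
  have hsq : (z - A) ^ 2 = A ^ 2 - B := by
    rcases hz with rfl | rfl <;> simp [Real.sq_sqrt hD]
  linear_combination hsq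

theorem sqrt_sq_sub_le_self {A B : ℝ} (hA : 0 ≤ A) (hB : 0 ≤ B) : √(A ^ 2 - B) ≤ A :=
  Real.sqrt_le_iff.mpr ⟨hA, by linarith⟩

theorem Aval_nonneg (c₁ c₂ x₁ x₂ : ℝ) : 0 ≤ Aval c₁ c₂ x₁ x₂ := by
  unfold Aval; positivity

theorem Bval_nonneg (c₁ c₂ x₁ x₂ : ℝ) : 0 ≤ Bval c₁ c₂ x₁ x₂ := sq_nonneg _

theorem Aval_sq_sub_Bval (c₁ c₂ x₁ x₂ : ℝ) :
    Aval c₁ c₂ x₁ x₂ ^ 2 - Bval c₁ c₂ x₁ x₂ =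
      ((c₁ - c₂) ^ 2 / 2 + 2 * ‖tau x₂‖ ^ 2) * ((c₁ + c₂) ^ 2 / 2 + 2 * ‖tau x₁‖ ^ 2) := by
  unfold Aval Bval; ring

theorem discriminant_and_roots_nonneg_general (c₁ c₂ : ℝ)
    (x₁ x₂ : ℝ) :
    (Aval c₁ c₂ x₁ x₂ ^ 2 - Bval c₁ c₂ x₁ x₂ =
      ((c₁ - c₂) ^ 2 / 2 + 2 * ‖tau x₂‖ ^ 2) *
        ((c₁ + c₂) ^ 2 / 2 + 2 * ‖tau x₁‖ ^ 2)) ∧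
    (0 ≤ Aval c₁ c₂ x₁ x₂ ^ 2 - Bval c₁ c₂ x₁ x₂) ∧
    (0 ≤ Aval c₁ c₂ x₁ x₂ - Real.sqrt (Aval c₁ c₂ x₁ x₂ ^ 2 - Bval c₁ c₂ x₁ x₂)) ∧
    (0 ≤ Aval c₁ c₂ x₁ x₂ + Real.sqrt (Aval c₁ c₂ x₁ x₂ ^ 2 - Bval c₁ c₂ x₁ x₂)) ∧
    (∀ z : ℝ, (z = Aval c₁ c₂ x₁ x₂ - Real.sqrt (Aval c₁ c₂ x₁ x₂ ^ 2 - Bval c₁ c₂ x₁ x₂) ∨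
        z = Aval c₁ c₂ x₁ x₂ + Real.sqrt (Aval c₁ c₂ x₁ x₂ ^ 2 - Bval c₁ c₂ x₁ x₂)) →
      z ^ 2 - 2 * Aval c₁ c₂ x₁ x₂ * z + Bval c₁ c₂ x₁ x₂ = 0) := by
  have hA := Aval_nonneg c₁ c₂ x₁ x₂
  have hD : 0 ≤ Aval c₁ c₂ x₁ x₂ ^ 2 - Bval c₁ c₂ x₁ x₂ := by
    rw [Aval_sq_sub_Bval]; positivity
  refine ⟨Aval_sq_sub_Bval c₁ c₂ x₁ x₂, hD, ?_, by positivity,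
    fun z hz => quadratic_eq_zero_of_eq_sub_sqrt_or_eq_add_sqrt hD hz⟩
  exact sub_nonneg.mpr (sqrt_sq_sub_le_self hA (Bval_nonneg c₁ c₂ x₁ x₂))

/-- The discriminant factors as
`A² − B = [(c₁−c₂)²/2 + 2|τ(x₂)|²]·[(c₁+c₂)²/2 + 2|τ(x₁)|²] ≥ 0`, and both roots
`z± = A ± √(A²−B)` of `z² − 2Az + B` are nonnegative. -/
theorem discriminant_and_roots_nonneg (c₁ c₂ : ℝ) (hc₁ : 0 < c₁) (hc₂ : 0 < c₂)
    (x₁ x₂ : ℝ) :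
    (Aval c₁ c₂ x₁ x₂ ^ 2 - Bval c₁ c₂ x₁ x₂ =
      ((c₁ - c₂) ^ 2 / 2 + 2 * ‖tau x₂‖ ^ 2) *
        ((c₁ + c₂) ^ 2 / 2 + 2 * ‖tau x₁‖ ^ 2)) ∧
    (0 ≤ Aval c₁ c₂ x₁ x₂ ^ 2 - Bval c₁ c₂ x₁ x₂) ∧
    (0 ≤ Aval c₁ c₂ x₁ x₂ - Real.sqrt (Aval c₁ c₂ x₁ x₂ ^ 2 - Bval c₁ c₂ x₁ x₂)) ∧
    (0 ≤ Aval c₁ c₂ x₁ x₂ + Real.sqrt (Aval c₁ c₂ x₁ x₂ ^ 2 - Bval c₁ c₂ x₁ x₂)) ∧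
    (∀ z : ℝ, (z = Aval c₁ c₂ x₁ x₂ - Real.sqrt (Aval c₁ c₂ x₁ x₂ ^ 2 - Bval c₁ c₂ x₁ x₂) ∨
        z = Aval c₁ c₂ x₁ x₂ + Real.sqrt (Aval c₁ c₂ x₁ x₂ ^ 2 - Bval c₁ c₂ x₁ x₂)) →
      z ^ 2 - 2 * Aval c₁ c₂ x₁ x₂ * z + Bval c₁ c₂ x₁ x₂ = 0) :=
  discriminant_and_roots_nonneg_general c₁ c₂ x₁ x₂

end
end

section
/- With c₁, c₂ > 0 and z₋(x₁,x₂) = A − √(A²−B) as above (A = (c₁²+c₂²)/2 + |τ(x₁)|² + |τ(x₂)|², B = (|τ(x₂)|² − |τ(x₁)|² − c₁c₂)²), one has min over (x₁,x₂) ∈ [0,2π)² of z₋(x₁,x₂) > 0 if and only if c₁c₂ > 4. -/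
/-!
With `a = |τ(x₁)|²`, `b = |τ(x₂)|²`, `s = (c₁² + c₂²)/2` and `p = c₁c₂` we have
`A ± (b - a - p) ≥ 0`, because `s ± p = (c₁ ± c₂)²/2`; hence `0 ≤ B ≤ A²`, so `z₋ ≥ 0`, with
`z₋ = 0` as soon as `B = 0`, and `z₋ ≥ B / (2A)` in general. As `b - a = 2(cos x₂ - cos x₁)` sweeps
out `[-4, 4]`, `B` vanishes somewhere iff `c₁c₂ ≤ 4`; if `c₁c₂ > 4` then `B ≥ (c₁c₂ - 4)²` and
`A ≤ s + 8` bound `z₋` below uniformly by a positive constant.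
-/

open Real

noncomputable section

/-- The lower root `z₋ = A − √(A²−B)`. -/
def zMinus (c₁ c₂ x₁ x₂ : ℝ) : ℝ :=
  Aval c₁ c₂ x₁ x₂ - Real.sqrt (Aval c₁ c₂ x₁ x₂ ^ 2 - Bval c₁ c₂ x₁ x₂)

theorem sub_sqrt_sq_sub_nonneg {a b : ℝ} (ha : 0 ≤ a) (hb : 0 ≤ b) : 0 ≤ a - √(a ^ 2 - b) := by
  have : √(a ^ 2 - b) ≤ a := Real.sqrt_le_iff.mpr ⟨ha, by linarith⟩
  linarith

theorem div_two_mul_le_sub_sqrt_sq_sub {a b : ℝ} (ha : 0 < a) (hb : b ≤ a ^ 2) :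
    b / (2 * a) ≤ a - √(a ^ 2 - b) := by
  have hba : b / (2 * a) ≤ a / 2 := by
    rw [div_le_iff₀ (by positivity)]
    nlinarith
  have hsq : a ^ 2 - b ≤ (a - b / (2 * a)) ^ 2 := by
    have : (a - b / (2 * a)) ^ 2 = a ^ 2 - b + (b / (2 * a)) ^ 2 := by
      field_simp
      ring
    exact this ▸ le_add_of_nonneg_right (sq_nonneg _)
  have : √(a ^ 2 - b) ≤ a - b / (2 * a) := Real.sqrt_le_iff.mpr ⟨by linarith, hsq⟩
  linarith

theorem norm_tau_sq (x : ℝ) : ‖tau x‖ ^ 2 = 2 + 2 * cos x := by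
  rw [Complex.sq_norm, tau, Complex.exp_mul_I]
  simp only [Complex.normSq_apply, Complex.add_re, Complex.one_re, Complex.cos_ofReal_re,
    Complex.mul_re, Complex.sin_ofReal_re, Complex.I_re, mul_zero, Complex.sin_ofReal_im,
    Complex.I_im, mul_one, sub_self, add_zero, Complex.add_im, Complex.one_im,
    Complex.cos_ofReal_im, Complex.mul_im, zero_add]
  linear_combination sin_sq_add_cos_sq x

theorem Aval_eq (c₁ c₂ x₁ x₂ : ℝ) :
    Aval c₁ c₂ x₁ x₂ = (c₁ ^ 2 + c₂ ^ 2) / 2 + 4 + 2 * cos x₁ + 2 * cos x₂ := by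
  rw [Aval, norm_tau_sq, norm_tau_sq]
  ring

theorem Bval_eq (c₁ c₂ x₁ x₂ : ℝ) :
    Bval c₁ c₂ x₁ x₂ = (2 * (cos x₂ - cos x₁) - c₁ * c₂) ^ 2 := by
  rw [Bval, norm_tau_sq, norm_tau_sq]
  ring

theorem Bval_le_Aval_sq (c₁ c₂ x₁ x₂ : ℝ) : Bval c₁ c₂ x₁ x₂ ≤ Aval c₁ c₂ x₁ x₂ ^ 2 := by
  have ha := sq_nonneg ‖tau x₁‖
  have hb := sq_nonneg ‖tau x₂‖
  rw [Bval, Aval]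
  apply sq_le_sq'
  · nlinarith [sq_nonneg (c₁ - c₂)]
  · nlinarith [sq_nonneg (c₁ + c₂)]

theorem zMinus_nonneg (c₁ c₂ x₁ x₂ : ℝ) : 0 ≤ zMinus c₁ c₂ x₁ x₂ :=
  sub_sqrt_sq_sub_nonneg (Aval_nonneg c₁ c₂ x₁ x₂) (sq_nonneg _)

theorem zMinus_eq_zero_of_Bval_eq_zero {c₁ c₂ x₁ x₂ : ℝ} (h : Bval c₁ c₂ x₁ x₂ = 0) :
    zMinus c₁ c₂ x₁ x₂ = 0 := by
  rw [zMinus, h, sub_zero, Real.sqrt_sq (Aval_nonneg c₁ c₂ x₁ x₂), sub_self]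

theorem exists_Bval_eq_zero {c₁ c₂ : ℝ} (h₀ : 0 ≤ c₁ * c₂) (h₄ : c₁ * c₂ ≤ 4) :
    ∃ x₂ ∈ Set.Ico 0 (2 * π), Bval c₁ c₂ π x₂ = 0 := by
  refine ⟨arccos (c₁ * c₂ / 2 - 1),
    ⟨arccos_nonneg _, (arccos_le_pi _).trans_lt (by linarith [pi_pos])⟩, ?_⟩
  rw [Bval_eq, cos_arccos (by linarith) (by linarith), cos_pi]
  ring

theorem le_zMinus {c₁ c₂ : ℝ} (hc₁ : 0 < c₁) (h : 4 < c₁ * c₂) (x₁ x₂ : ℝ) :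
    (c₁ * c₂ - 4) ^ 2 / (2 * ((c₁ ^ 2 + c₂ ^ 2) / 2 + 8)) ≤ zMinus c₁ c₂ x₁ x₂ := by
  have hA := Aval_eq c₁ c₂ x₁ x₂
  have hA₀ : 0 < Aval c₁ c₂ x₁ x₂ := by
    nlinarith [neg_one_le_cos x₁, neg_one_le_cos x₂]
  have hA₈ : Aval c₁ c₂ x₁ x₂ ≤ (c₁ ^ 2 + c₂ ^ 2) / 2 + 8 := by
    linarith [cos_le_one x₁, cos_le_one x₂]
  have hB : (c₁ * c₂ - 4) ^ 2 ≤ Bval c₁ c₂ x₁ x₂ := by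
    rw [Bval_eq]
    nlinarith [neg_one_le_cos x₁, cos_le_one x₂]
  calc (c₁ * c₂ - 4) ^ 2 / (2 * ((c₁ ^ 2 + c₂ ^ 2) / 2 + 8))
      ≤ Bval c₁ c₂ x₁ x₂ / (2 * Aval c₁ c₂ x₁ x₂) :=
        div_le_div₀ ((sq_nonneg _).trans hB) hB (by positivity) (by linarith)
    _ ≤ zMinus c₁ c₂ x₁ x₂ := div_two_mul_le_sub_sqrt_sq_sub hA₀ (Bval_le_Aval_sq ..)

/-- The minimum of `z₋` over the torus is positive iff `c₁c₂ > 4`. -/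
theorem min_zMinus_pos_iff (c₁ c₂ : ℝ) (hc₁ : 0 < c₁) (hc₂ : 0 < c₂) :
    0 < sInf {z : ℝ | ∃ x₁ ∈ Set.Ico (0 : ℝ) (2 * π), ∃ x₂ ∈ Set.Ico (0 : ℝ) (2 * π),
        z = zMinus c₁ c₂ x₁ x₂} ↔ 4 < c₁ * c₂ := by
  set S := {z : ℝ | ∃ x₁ ∈ Set.Ico (0 : ℝ) (2 * π), ∃ x₂ ∈ Set.Ico (0 : ℝ) (2 * π),
    z = zMinus c₁ c₂ x₁ x₂}
  constructor
  · intro hpos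
    by_contra! h₄
    obtain ⟨x₂, hx₂, hB⟩ := exists_Bval_eq_zero (mul_pos hc₁ hc₂).le h₄
    have hbdd : BddBelow S := ⟨0, by rintro _ ⟨x₁, -, x₂, -, rfl⟩; exact zMinus_nonneg ..⟩
    have hle := csInf_le hbdd ⟨π, ⟨pi_nonneg, by linarith [pi_pos]⟩, x₂, hx₂, rfl⟩
    rw [zMinus_eq_zero_of_Bval_eq_zero hB] at hle
    linarith
  · intro h₄
    have hδ : 0 < (c₁ * c₂ - 4) ^ 2 / (2 * ((c₁ ^ 2 + c₂ ^ 2) / 2 + 8)) := by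
      have : c₁ * c₂ - 4 ≠ 0 := by linarith
      positivity
    have h0 : (0 : ℝ) ∈ Set.Ico 0 (2 * π) := ⟨le_rfl, by positivity⟩
    refine hδ.trans_le (le_csInf ⟨_, 0, h0, 0, h0, rfl⟩ ?_)
    rintro _ ⟨x₁, -, x₂, -, rfl⟩
    exact le_zMinus hc₁ h₄ x₁ x₂

end
end

section
/- With c₁, c₂ > 0, A and B as above, the function z₋(x₁,x₂) = A − √(A²−B) attains its maximum over [0,2π)² at (0,π), and max z₋ = (c₁²+c₂²)/2 + 4 − (|c₁−c₂|/2)·√((c₁+c₂)² + 16). -/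
open Real

noncomputable section

/-!
Put `p = (c₁+c₂)²/2`, `q = (c₁-c₂)²/2`, `u = |τ(x₁)|²`, `v = |τ(x₂)|²`. The factorisation of
`A² − B` gives `z₋ = (c₁²+c₂²)/2 + u + v − √(p+2u)·√(q+2v)`, with `(u, v)` ranging over `[0,4]²`.
Since `√` is concave, this is convex in `u` for fixed `v` and in `v` for fixed `u`, so its maximum
over the square is attained at a corner. Comparing the four corners using `0 ≤ q ≤ p` shows that
`(u, v) = (4, 0)`, i.e. `(x₁, x₂) = (0, π)`, wins.
-/

open Set

lemma norm_tau_sq_mem_Icc (x : ℝ) : ‖tau x‖ ^ 2 ∈ Icc (0 : ℝ) 4 := by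
  have h : ‖tau x‖ ≤ 2 :=
    calc ‖tau x‖ ≤ ‖(1 : ℂ)‖ + ‖Complex.exp (x * Complex.I)‖ := norm_add_le _ _
      _ = 2 := by rw [norm_one, Complex.norm_exp_ofReal_mul_I]; norm_num
  exact ⟨by positivity, by nlinarith [norm_nonneg (tau x)]⟩

lemma norm_tau_zero_sq : ‖tau 0‖ ^ 2 = 4 := by
  norm_num [tau]

lemma norm_tau_pi_sq : ‖tau π‖ ^ 2 = 0 := by
  simp [tau, Complex.exp_pi_mul_I]

lemma concaveOn_sqrt_add_two_mul {p : ℝ} (hp : 0 ≤ p) :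
    ConcaveOn ℝ (Ici 0) (fun u : ℝ => √(p + 2 * u)) := by
  have h := (strictConcaveOn_sqrt.concaveOn.translate_right p).comp_linearMap
    ((2 : ℝ) • LinearMap.id)
  refine h.subset (fun u (hu : 0 ≤ u) => ?_) (convex_Ici 0)
  simp only [mem_preimage, LinearMap.smul_apply, LinearMap.id_apply, smul_eq_mul, mem_Ici]
  positivity

lemma convexOn_sub_mul_sqrt_add_two_mul {C p : ℝ} (hC : 0 ≤ C) (hp : 0 ≤ p) :
    ConvexOn ℝ (Ici 0) (fun u : ℝ => u - C * √(p + 2 * u)) :=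
  (convexOn_id (convex_Ici 0)).sub ((concaveOn_sqrt_add_two_mul hp).smul hC)

/-- `z₋ − (c₁²+c₂²)/2` in the coordinates `p, q, u, v` above. -/
def reducedZ (p q u v : ℝ) : ℝ := u + v - √(p + 2 * u) * √(q + 2 * v)

lemma reducedZ_comm (p q u v : ℝ) : reducedZ p q u v = reducedZ q p v u := by
  unfold reducedZ; ring

lemma reducedZ_four_zero (p q : ℝ) : reducedZ p q 4 0 = 4 - √(p + 8) * √q := by
  norm_num [reducedZ]

lemma reducedZ_le_max {p q u : ℝ} (v : ℝ) (hp : 0 ≤ p) (hu : u ∈ Icc 0 4) :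
    reducedZ p q u v ≤ max (reducedZ p q 0 v) (reducedZ p q 4 v) := by
  have h := (convexOn_sub_mul_sqrt_add_two_mul (sqrt_nonneg (q + 2 * v)) hp).le_max_of_mem_Icc
    (mem_Ici.2 le_rfl) (mem_Ici.2 (by norm_num)) hu
  have e (w : ℝ) : reducedZ p q w v = (w - √(q + 2 * v) * √(p + 2 * w)) + v := by
    unfold reducedZ; ring
  rw [e, e, e, max_add_add_right]
  exact add_le_add_left h v

section Corners

variable {p q : ℝ} (hq : 0 ≤ q) (hqp : q ≤ p)
include hq hqp

lemma reducedZ_zero_zero_le : reducedZ p q 0 0 ≤ reducedZ p q 4 0 := by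
  have hp := hq.trans hqp
  have hqa : √q ≤ √p := sqrt_le_sqrt hqp
  have hab : √p ≤ √(p + 8) := sqrt_le_sqrt (by linarith)
  have ha2 := sq_sqrt hp
  have hb2 := sq_sqrt (show 0 ≤ p + 8 by linarith)
  rw [reducedZ_four_zero]
  norm_num [reducedZ]
  -- `√q (√(p+8) − √p) ≤ √p (√(p+8) − √p) ≤ 4`, the last step being `(√(p+8) − √p)² ≥ 0`.
  nlinarith [mul_le_mul_of_nonneg_right hqa (sub_nonneg.2 hab), sq_nonneg (√(p + 8) - √p)]

lemma reducedZ_zero_four_le : reducedZ p q 0 4 ≤ reducedZ p q 4 0 := by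
  have hp := hq.trans hqp
  have h : √(p + 8) * √q ≤ √p * √(q + 8) := by
    rw [← sqrt_mul (by linarith), ← sqrt_mul hp]
    exact sqrt_le_sqrt (by nlinarith)
  rw [reducedZ_four_zero]
  norm_num [reducedZ]
  linarith

lemma reducedZ_four_four_le : reducedZ p q 4 4 ≤ reducedZ p q 4 0 := by
  have hdb : √(q + 8) ≤ √(p + 8) := sqrt_le_sqrt (by linarith)
  have hcd : √q ≤ √(q + 8) := sqrt_le_sqrt (by linarith)
  have hc2 := sq_sqrt hq
  have hd2 := sq_sqrt (show 0 ≤ q + 8 by linarith)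
  rw [reducedZ_four_zero]
  norm_num [reducedZ]
  -- `√(p+8) (√(q+8) − √q) ≥ √(q+8) (√(q+8) − √q) ≥ 4`, the last step being `(√(q+8) − √q)² ≥ 0`.
  nlinarith [mul_le_mul_of_nonneg_right hdb (sub_nonneg.2 hcd), sq_nonneg (√(q + 8) - √q)]

lemma reducedZ_le_reducedZ_four_zero {u v : ℝ} (hu : u ∈ Icc 0 4) (hv : v ∈ Icc 0 4) :
    reducedZ p q u v ≤ reducedZ p q 4 0 := by
  have hmax_v (w : ℝ) : reducedZ p q w v ≤ max (reducedZ p q w 0) (reducedZ p q w 4) := by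
    simp only [reducedZ_comm p q w]
    exact reducedZ_le_max w hq hv
  calc reducedZ p q u v ≤ max (reducedZ p q 0 v) (reducedZ p q 4 v) :=
        reducedZ_le_max v (hq.trans hqp) hu
    _ ≤ max (max (reducedZ p q 0 0) (reducedZ p q 0 4))
          (max (reducedZ p q 4 0) (reducedZ p q 4 4)) := max_le_max (hmax_v 0) (hmax_v 4)
    _ ≤ reducedZ p q 4 0 := by
      simp only [max_le_iff]
      exact ⟨⟨reducedZ_zero_zero_le hq hqp, reducedZ_zero_four_le hq hqp⟩, le_rfl,
        reducedZ_four_four_le hq hqp⟩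

end Corners

lemma zMinus_eq_reducedZ (c₁ c₂ x₁ x₂ : ℝ) :
    zMinus c₁ c₂ x₁ x₂ = (c₁ ^ 2 + c₂ ^ 2) / 2 +
      reducedZ ((c₁ + c₂) ^ 2 / 2) ((c₁ - c₂) ^ 2 / 2) (‖tau x₁‖ ^ 2) (‖tau x₂‖ ^ 2) := by
  have hfac : Aval c₁ c₂ x₁ x₂ ^ 2 - Bval c₁ c₂ x₁ x₂ =
      ((c₁ + c₂) ^ 2 / 2 + 2 * ‖tau x₁‖ ^ 2) * ((c₁ - c₂) ^ 2 / 2 + 2 * ‖tau x₂‖ ^ 2) := by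
    unfold Aval Bval; ring
  rw [zMinus, hfac, sqrt_mul (by positivity), reducedZ, Aval]
  ring

lemma sqrt_sq_half_add_eight_mul_sqrt_sq_half (a b : ℝ) :
    √(a ^ 2 / 2 + 8) * √(b ^ 2 / 2) = |b| / 2 * √(a ^ 2 + 16) := by
  rw [← sqrt_mul (by positivity), ← sqrt_sq (by positivity : 0 ≤ |b| / 2 * √(a ^ 2 + 16)),
    mul_pow, div_pow, sq_abs, sq_sqrt (by positivity)]
  ring_nf

/-- `z₋` attains its maximum over the torus at `(0, π)`, where it equals
`(c₁²+c₂²)/2 + 4 − (|c₁−c₂|/2)·√((c₁+c₂)² + 16)`. -/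
theorem max_zMinus (c₁ c₂ : ℝ) (hc₁ : 0 < c₁) (hc₂ : 0 < c₂) :
    (∀ x₁ ∈ Set.Ico (0 : ℝ) (2 * π), ∀ x₂ ∈ Set.Ico (0 : ℝ) (2 * π),
        zMinus c₁ c₂ x₁ x₂ ≤ zMinus c₁ c₂ 0 π) ∧
    zMinus c₁ c₂ 0 π =
      (c₁ ^ 2 + c₂ ^ 2) / 2 + 4 - (|c₁ - c₂| / 2) * Real.sqrt ((c₁ + c₂) ^ 2 + 16) := by
  have hq : 0 ≤ (c₁ - c₂) ^ 2 / 2 := by positivity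
  have hqp : (c₁ - c₂) ^ 2 / 2 ≤ (c₁ + c₂) ^ 2 / 2 := by nlinarith [mul_pos hc₁ hc₂]
  have hcorner : zMinus c₁ c₂ 0 π =
      (c₁ ^ 2 + c₂ ^ 2) / 2 + reducedZ ((c₁ + c₂) ^ 2 / 2) ((c₁ - c₂) ^ 2 / 2) 4 0 := by
    rw [zMinus_eq_reducedZ, norm_tau_zero_sq, norm_tau_pi_sq]
  refine ⟨fun x₁ _ x₂ _ => ?_, ?_⟩
  · rw [hcorner, zMinus_eq_reducedZ]
    exact add_le_add_right (reducedZ_le_reducedZ_four_zero hq hqp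
      (norm_tau_sq_mem_Icc x₁) (norm_tau_sq_mem_Icc x₂)) _
  · rw [hcorner, reducedZ_four_zero, sqrt_sq_half_add_eight_mul_sqrt_sq_half]
    ring

end
end

section
/- If c₁² > c₂² + 8 with c₁, c₂ > 0, then (c₁²+c₂²)/2 + 4 − (|c₁−c₂|/2)·√((c₁+c₂)² + 16) < max(c₁², c₂²); i.e., the sufficient condition c₁² > c₂² + 8 implies the exterior gap condition max z₋ < min z₊. -/
/-- If `c₁² > c₂² + 8` (with `c₁, c₂ > 0`), then
`(c₁²+c₂²)/2 + 4 − (|c₁−c₂|/2)·√((c₁+c₂)² + 16) < max(c₁², c₂²)`. -/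
theorem exterior_gap_sufficient (c₁ c₂ : ℝ) (hc₁ : 0 < c₁) (hc₂ : 0 < c₂)
    (h : c₂ ^ 2 + 8 < c₁ ^ 2) :
    (c₁ ^ 2 + c₂ ^ 2) / 2 + 4 - (|c₁ - c₂| / 2) * Real.sqrt ((c₁ + c₂) ^ 2 + 16) <
      max (c₁ ^ 2) (c₂ ^ 2) := by
  have hlt : c₂ < c₁ := by nlinarith
  have hmax : max (c₁ ^ 2) (c₂ ^ 2) = c₁ ^ 2 := by
    rw [max_eq_left]; nlinarith
  rw [hmax]
  have hs : 0 ≤ Real.sqrt ((c₁ + c₂) ^ 2 + 16) := Real.sqrt_nonneg _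
  have habs : 0 ≤ |c₁ - c₂| / 2 := by positivity
  nlinarith [mul_nonneg habs hs]
end
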